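/- arXiv:2602.07311 — 4 statements merged into one kernel-verified Lean document; each statement's English description precedes it below -/
import Mathlib

section
/- If Π* is a strictly positive minimizer of the entropy-regularized OT problem, then there exist vectors u ∈ R^n_{>0} and v ∈ R^m_{>0} such that Π*_{ij} = u_i · exp(−C_{ij}/ε) · v_j for all i, j; that is, Π* = diag(u) K diag(v) with Gibbs kernel K_{ij} = exp(−C_{ij}/ε). -/
/-!
Moving the minimizer `P` along `t ↦ P + t • D` with `D = (eᵢ - eᵢ')(eⱼ - eⱼ')ᵀ`, which has zero
row and column sums, stays in the transport polytope for small `|t|` because `P > 0`. So the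
derivative at `t = 0` vanishes, i.e. the potential `φ i j = C i j + ε log (P i j)` satisfies
`φ i j + φ i' j' = φ i j' + φ i' j`. Hence `φ i j = α i + β j`, and exponentiating
`log (P i j) = (α i - C i j + β j) / ε` gives the factorization.
-/

open Real Finset Filter Topology Matrix

variable {ι κ : Type*}

theorem exists_eq_add_of_add_eq_add (φ : ι → κ → ℝ)
    (h : ∀ i i' j j', φ i j + φ i' j' = φ i j' + φ i' j) :
    ∃ (α : ι → ℝ) (β : κ → ℝ), ∀ i j, φ i j = α i + β j := by
  rcases isEmpty_or_nonempty ι with hι | ⟨⟨i₀⟩⟩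
  · exact ⟨0, 0, fun i => isEmptyElim i⟩
  rcases isEmpty_or_nonempty κ with hκ | ⟨⟨j₀⟩⟩
  · exact ⟨0, 0, fun _ j => isEmptyElim j⟩
  exact ⟨fun i => φ i j₀ - φ i₀ j₀, fun j => φ i₀ j, fun i j => by linarith [h i i₀ j j₀]⟩

section Rectangle

variable [DecidableEq ι] [DecidableEq κ]

def rectangleSwap (i i' : ι) (j j' : κ) : Matrix ι κ ℝ :=
  vecMulVec (Pi.single i 1 - Pi.single i' 1) (Pi.single j 1 - Pi.single j' 1)

theorem sum_rectangleSwap_row [Fintype κ] (i i' : ι) (j j' : κ) (a : ι) :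
    ∑ b, rectangleSwap i i' j j' a b = 0 := by
  simp [rectangleSwap, vecMulVec_apply, ← mul_sum, sum_sub_distrib]

theorem sum_rectangleSwap_col [Fintype ι] (i i' : ι) (j j' : κ) (b : κ) :
    ∑ a, rectangleSwap i i' j j' a b = 0 := by
  simp [rectangleSwap, vecMulVec_apply, ← sum_mul, sum_sub_distrib]

theorem sum_mul_rectangleSwap [Fintype ι] [Fintype κ] (G : Matrix ι κ ℝ) (i i' : ι) (j j' : κ) :
    ∑ a, ∑ b, G a b * rectangleSwap i i' j j' a b = G i j - G i j' - G i' j + G i' j' := by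
  simp only [rectangleSwap, vecMulVec_apply, Pi.sub_apply, Pi.single_apply, mul_sub, mul_ite,
    mul_one, mul_zero, sum_sub_distrib, sum_ite_eq', mem_univ, ↓reduceIte]
  ring

end Rectangle

variable [Fintype ι] [Fintype κ]

noncomputable def entropicCost (C : Matrix ι κ ℝ) (ε : ℝ) (Q : Matrix ι κ ℝ) : ℝ :=
  ∑ i, ∑ j, (C i j * Q i j + ε * (Q i j * log (Q i j)))

def transportPolytope (r : ι → ℝ) (c : κ → ℝ) : Set (Matrix ι κ ℝ) :=
  {Q | (∀ i j, 0 ≤ Q i j) ∧ (∀ i, ∑ j, Q i j = r i) ∧ (∀ j, ∑ i, Q i j = c j)}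

theorem hasDerivAt_entropicCost_add_smul (C : Matrix ι κ ℝ) (ε : ℝ) {P : Matrix ι κ ℝ}
    (hP : ∀ i j, 0 < P i j) (D : Matrix ι κ ℝ) :
    HasDerivAt (fun t : ℝ => entropicCost C ε (P + t • D))
      (∑ i, ∑ j, (C i j + ε * (log (P i j) + 1)) * D i j) 0 := by
  refine HasDerivAt.fun_sum fun i _ => HasDerivAt.fun_sum fun j _ => ?_
  have hline : HasDerivAt (fun t : ℝ => (P + t • D) i j) (D i j) 0 := by
    simpa using ((hasDerivAt_id (0 : ℝ)).mul_const (D i j)).const_add (P i j)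
  have hP0 : (P + (0 : ℝ) • D) i j ≠ 0 := by simpa using (hP i j).ne'
  have hmul_log := (hasDerivAt_mul_log hP0).comp 0 hline
  simp only [zero_smul, add_zero] at hmul_log
  convert (hline.const_mul (C i j)).fun_add (hmul_log.const_mul ε) using 1
  · rfl
  · ring

theorem eventually_nonneg_add_smul {P : Matrix ι κ ℝ} (hP : ∀ i j, 0 < P i j)
    (D : Matrix ι κ ℝ) : ∀ᶠ t : ℝ in 𝓝 0, ∀ i j, 0 ≤ (P + t • D) i j := by
  simp only [eventually_all]
  intro i j
  have hcont : Continuous fun t : ℝ => P i j + t * D i j := by fun_prop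
  filter_upwards [hcont.continuousAt.eventually (lt_mem_nhds (by simpa using hP i j))]
    with t ht
  simpa using ht.le

section Minimizer

variable {C : Matrix ι κ ℝ} {ε : ℝ} {r : ι → ℝ} {c : κ → ℝ} {P : Matrix ι κ ℝ}

theorem sum_gradient_mul_eq_zero_of_isMinOn (hP : ∀ i j, 0 < P i j)
    (hPr : ∀ i, ∑ j, P i j = r i) (hPc : ∀ j, ∑ i, P i j = c j)
    (hmin : IsMinOn (entropicCost C ε) (transportPolytope r c) P) {D : Matrix ι κ ℝ}
    (hDr : ∀ i, ∑ j, D i j = 0) (hDc : ∀ j, ∑ i, D i j = 0) :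
    ∑ i, ∑ j, (C i j + ε * (log (P i j) + 1)) * D i j = 0 := by
  refine IsLocalMin.hasDerivAt_eq_zero ?_ (hasDerivAt_entropicCost_add_smul C ε hP D)
  filter_upwards [eventually_nonneg_add_smul hP D] with t ht
  simp only [add_zero, zero_smul]
  refine hmin ⟨ht, fun i => ?_, fun j => ?_⟩
  · simp [sum_add_distrib, ← mul_sum, hDr, hPr]
  · simp [sum_add_distrib, ← mul_sum, hDc, hPc]

theorem potential_add_eq_add_of_isMinOn [DecidableEq ι] [DecidableEq κ]
    (hP : ∀ i j, 0 < P i j) (hPr : ∀ i, ∑ j, P i j = r i) (hPc : ∀ j, ∑ i, P i j = c j)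
    (hmin : IsMinOn (entropicCost C ε) (transportPolytope r c) P) (i i' : ι) (j j' : κ) :
    C i j + ε * log (P i j) + (C i' j' + ε * log (P i' j')) =
      C i j' + ε * log (P i j') + (C i' j + ε * log (P i' j)) := by
  have hgrad := sum_gradient_mul_eq_zero_of_isMinOn hP hPr hPc hmin
    (sum_rectangleSwap_row i i' j j') (sum_rectangleSwap_col i i' j j')
  have hexpand := sum_mul_rectangleSwap (fun a b => C a b + ε * (log (P a b) + 1)) i i' j j'
  beta_reduce at hexpand
  linarith

end Minimizer

theorem entropic_ot_minimizer_factorization_general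
    (n m : ℕ) (C : Matrix (Fin n) (Fin m) ℝ) (ε : ℝ) (hε : 0 < ε)
    (r : Fin n → ℝ) (c : Fin m → ℝ)
    (P : Matrix (Fin n) (Fin m) ℝ)
    (hPpos : ∀ i j, 0 < P i j)
    (hPr : ∀ i, ∑ j, P i j = r i) (hPc : ∀ j, ∑ i, P i j = c j)
    (hPmin : ∀ Q : Matrix (Fin n) (Fin m) ℝ,
      ((∀ i j, 0 ≤ Q i j) ∧ (∀ i, ∑ j, Q i j = r i) ∧ (∀ j, ∑ i, Q i j = c j)) →
      (∑ i, ∑ j, (C i j * P i j + ε * (P i j * Real.log (P i j)))) ≤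
        ∑ i, ∑ j, (C i j * Q i j + ε * (Q i j * Real.log (Q i j)))) :
    ∃ (u : Fin n → ℝ) (v : Fin m → ℝ),
      (∀ i, 0 < u i) ∧ (∀ j, 0 < v j) ∧
      ∀ i j, P i j = u i * Real.exp (-C i j / ε) * v j := by
  have hmin : IsMinOn (entropicCost C ε) (transportPolytope r c) P := hPmin
  obtain ⟨α, β, hαβ⟩ := exists_eq_add_of_add_eq_add (fun i j => C i j + ε * log (P i j))
    (potential_add_eq_add_of_isMinOn hPpos hPr hPc hmin)
  refine ⟨fun i => exp (α i / ε), fun j => exp (β j / ε), fun _ => exp_pos _,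
    fun _ => exp_pos _, fun i j => ?_⟩
  rw [← exp_add, ← exp_add, ← exp_log (hPpos i j)]
  congr 1
  field_simp
  linarith [hαβ i j]

/-- A strictly positive minimizer of the entropy-regularized OT problem
factors as `P i j = u i * exp (-C i j / ε) * v j` for some strictly positive `u, v`. -/
theorem entropic_ot_minimizer_factorization
    (n m : ℕ) (C : Matrix (Fin n) (Fin m) ℝ) (ε : ℝ) (hε : 0 < ε)
    (r : Fin n → ℝ) (c : Fin m → ℝ)
    (hr : ∀ i, 0 < r i) (hc : ∀ j, 0 < c j)
    (hr1 : ∑ i, r i = 1) (hc1 : ∑ j, c j = 1)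
    (P : Matrix (Fin n) (Fin m) ℝ)
    (hPpos : ∀ i j, 0 < P i j)
    (hPr : ∀ i, ∑ j, P i j = r i) (hPc : ∀ j, ∑ i, P i j = c j)
    (hPmin : ∀ Q : Matrix (Fin n) (Fin m) ℝ,
      ((∀ i j, 0 ≤ Q i j) ∧ (∀ i, ∑ j, Q i j = r i) ∧ (∀ j, ∑ i, Q i j = c j)) →
      (∑ i, ∑ j, (C i j * P i j + ε * (P i j * Real.log (P i j)))) ≤
        ∑ i, ∑ j, (C i j * Q i j + ε * (Q i j * Real.log (Q i j)))) :
    ∃ (u : Fin n → ℝ) (v : Fin m → ℝ),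
      (∀ i, 0 < u i) ∧ (∀ j, 0 < v j) ∧
      ∀ i j, P i j = u i * Real.exp (-C i j / ε) * v j :=
  entropic_ot_minimizer_factorization_general n m C ε hε r c P hPpos hPr hPc hPmin
end

section
/- The scaling vectors in the Sinkhorn factorization are unique up to a multiplicative constant: if u, u' ∈ R^n_{>0} and v, v' ∈ R^m_{>0} satisfy diag(u) K diag(v) = diag(u') K diag(v') for a strictly positive matrix K, then there exists α > 0 with u' = α u and v' = v / α. -/
/-- Sinkhorn scaling vectors are unique up to a multiplicative constant. -/
theorem sinkhorn_scaling_unique_up_to_constant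
    (n m : ℕ) [NeZero n] [NeZero m]
    (K : Matrix (Fin n) (Fin m) ℝ) (hK : ∀ i j, 0 < K i j)
    (u u' : Fin n → ℝ) (v v' : Fin m → ℝ)
    (hu : ∀ i, 0 < u i) (hu' : ∀ i, 0 < u' i)
    (hv : ∀ j, 0 < v j) (hv' : ∀ j, 0 < v' j)
    (heq : ∀ i j, u i * K i j * v j = u' i * K i j * v' j) :
    ∃ α : ℝ, 0 < α ∧ (∀ i, u' i = α * u i) ∧ (∀ j, v' j = v j / α) := by
  have i0 : Fin n := ⟨0, Nat.pos_of_ne_zero (NeZero.ne n)⟩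
  have j0 : Fin m := ⟨0, Nat.pos_of_ne_zero (NeZero.ne m)⟩
  have key : ∀ i j, u i * v j = u' i * v' j := by
    intro i j
    have h : (u i * v j) * K i j = (u' i * v' j) * K i j := by
      have := heq i j; ring_nf; ring_nf at this; linarith
    exact mul_right_cancel₀ (hK i j).ne' h
  set α := u' i0 / u i0 with hα
  refine ⟨α, div_pos (hu' i0) (hu i0), ?_, ?_⟩
  · intro i
    have h : (u' i * u i0) * v' j0 = (u' i0 * u i) * v' j0 := by
      linear_combination (u i) * (key i0 j0) - (u i0) * (key i j0)
    have h2 := mul_right_cancel₀ (hv' j0).ne' h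
    rw [hα, div_mul_eq_mul_div, eq_comm, div_eq_iff (hu i0).ne']
    linarith
  · intro j
    have h := key i0 j
    have hαne : u' i0 / u i0 ≠ 0 := (div_pos (hu' i0) (hu i0)).ne'
    rw [hα, eq_div_iff hαne, mul_div_assoc', div_eq_iff (hu i0).ne']
    linarith
end

section
/- (Birkhoff contraction) For a strictly positive matrix A ∈ R^{n×m}_{>0} with projective diameter Δ(A) = max_{i,j,k,l} log( A_{ik} A_{jl} / (A_{il} A_{jk}) ), multiplication by A is a contraction in the Hilbert projective metric with coefficient τ(A) = tanh(Δ(A)/4) < 1: d_H(Ax, Ay) ≤ τ(A) · d_H(x, y) for all x, y ∈ R^m_{>0}. -/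
/-!
Fix two rows `a, b` of `A` and interpolate between `x` and `y` along `z_c = x ∘ exp (c t)`,
`t = log (y / x)`. The log cross-ratio `log ((a⬝x)(b⬝y) / ((b⬝x)(a⬝y)))` is the increment over
`c ∈ [0, 1]` of `log (b⬝z_c) - log (a⬝z_c)`, whose derivative is the difference of the means of
`t` under the probability vectors `p, q` proportional to `b ∘ z_c` and `a ∘ z_c`. Their cross
ratios `p_k q_l / (p_l q_k)` are bounded by `e^Δ`, which bounds their total variation distance by
`(e^{Δ/2} - 1)/(e^{Δ/2} + 1) = tanh (Δ/4)`, while the oscillation of `t` is at most `d_H(x, y)`.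
-/

open Real Finset

theorem Real.tanh_eq_exp_two_mul (x : ℝ) :
    tanh x = (exp (2 * x) - 1) / (exp (2 * x) + 1) := by
  rw [tanh_eq, two_mul, exp_add, exp_neg]
  field_simp

theorem sub_le_of_odds_le {s P Q : ℝ} (hs : 1 ≤ s) (hQ : 0 ≤ Q)
    (h : P * (1 - Q) ≤ s ^ 2 * (Q * (1 - P))) : P - Q ≤ (s - 1) / (s + 1) := by
  have hd : 0 < 1 + (s ^ 2 - 1) * Q := by
    nlinarith [mul_nonneg (by nlinarith : 0 ≤ s ^ 2 - 1) hQ]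
  have hPQ : (P - Q) * (1 + (s ^ 2 - 1) * Q) ≤ (s ^ 2 - 1) * (Q * (1 - Q)) := by nlinarith
  -- the slack is `(s - 1) (1 - (s + 1) Q)²`
  have hsq : (s + 1) * ((s ^ 2 - 1) * (Q * (1 - Q))) ≤ (s - 1) * (1 + (s ^ 2 - 1) * Q) := by
    nlinarith [mul_nonneg (sub_nonneg.2 hs) (sq_nonneg (1 - (s + 1) * Q))]
  rw [le_div_iff₀ (by linarith)]
  nlinarith

section

variable {ι : Type*} [Fintype ι]

theorem sum_sub_sum_le_of_cross_le {p q : ι → ℝ} {s : ℝ} (hq : ∀ k, 0 ≤ q k)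
    (hp1 : ∑ k, p k = 1) (hq1 : ∑ k, q k = 1) (hs : 1 ≤ s)
    (hpq : ∀ k l, p k * q l ≤ s ^ 2 * (p l * q k)) (S : Finset ι) :
    ∑ k ∈ S, p k - ∑ k ∈ S, q k ≤ (s - 1) / (s + 1) := by
  classical
  have hp_compl : ∑ k ∈ Sᶜ, p k = 1 - ∑ k ∈ S, p k := by
    rw [← hp1, ← sum_add_sum_compl S]; ring
  have hq_compl : ∑ k ∈ Sᶜ, q k = 1 - ∑ k ∈ S, q k := by
    rw [← hq1, ← sum_add_sum_compl S]; ring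
  refine sub_le_of_odds_le hs (sum_nonneg fun k _ ↦ hq k) ?_
  rw [← hp_compl, ← hq_compl, sum_mul_sum, sum_mul_sum, mul_sum]
  refine sum_le_sum fun k _ ↦ ?_
  rw [mul_sum]
  exact sum_le_sum fun l _ ↦ (hpq k l).trans_eq (by ring)

theorem sum_mul_sub_sum_mul_le_of_cross_le [Nonempty ι] {p q t : ι → ℝ} {s L : ℝ}
    (hq : ∀ k, 0 ≤ q k) (hp1 : ∑ k, p k = 1) (hq1 : ∑ k, q k = 1) (hs : 1 ≤ s)
    (hpq : ∀ k l, p k * q l ≤ s ^ 2 * (p l * q k)) (ht : ∀ k l, t k - t l ≤ L) :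
    ∑ k, p k * t k - ∑ k, q k * t k ≤ (s - 1) / (s + 1) * L := by
  obtain ⟨k₀, -, hk₀⟩ := exists_min_image univ t univ_nonempty
  set S := univ.filter fun k ↦ q k < p k
  have hL : 0 ≤ L := by simpa using ht k₀ k₀
  calc ∑ k, p k * t k - ∑ k, q k * t k = ∑ k, (p k - q k) * (t k - t k₀) := by
        simp only [sub_mul, mul_sub, sum_sub_distrib, ← sum_mul, hp1, hq1]
        ring
    _ ≤ ∑ k ∈ S, (p k - q k) * L := by
        rw [sum_filter]
        refine sum_le_sum fun k _ ↦ ?_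
        split_ifs with hk
        · exact mul_le_mul_of_nonneg_left (ht k k₀) (by linarith)
        · exact mul_nonpos_of_nonpos_of_nonneg (by linarith) (by linarith [hk₀ k (mem_univ k)])
    _ = (∑ k ∈ S, p k - ∑ k ∈ S, q k) * L := by rw [← sum_sub_distrib, sum_mul]
    _ ≤ (s - 1) / (s + 1) * L :=
        mul_le_mul_of_nonneg_right (sum_sub_sum_le_of_cross_le hq hp1 hq1 hs hpq S) hL

theorem sum_mul_div_sum_sub_le_of_cross_le [Nonempty ι] {u v t : ι → ℝ} {s L : ℝ}
    (hu : ∀ k, 0 < u k) (hv : ∀ k, 0 < v k) (hs : 1 ≤ s)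
    (huv : ∀ k l, u k * v l ≤ s ^ 2 * (u l * v k)) (ht : ∀ k l, t k - t l ≤ L) :
    (∑ k, u k * t k) / ∑ k, u k - (∑ k, v k * t k) / ∑ k, v k ≤ (s - 1) / (s + 1) * L := by
  have hU : 0 < ∑ k, u k := sum_pos (fun k _ ↦ hu k) univ_nonempty
  have hV : 0 < ∑ k, v k := sum_pos (fun k _ ↦ hv k) univ_nonempty
  have key := sum_mul_sub_sum_mul_le_of_cross_le (p := fun k ↦ u k / ∑ k, u k)
    (q := fun k ↦ v k / ∑ k, v k) (fun k ↦ (div_pos (hv k) hV).le)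
    (by rw [← sum_div, div_self hU.ne']) (by rw [← sum_div, div_self hV.ne']) hs (fun k l ↦ ?_) ht
  · simpa only [div_mul_eq_mul_div, sum_div] using key
  · rw [div_mul_div_comm, div_mul_div_comm, ← mul_div_assoc, mul_comm (∑ k, u k)]
    exact div_le_div_of_nonneg_right (huv k l) (by positivity)

theorem hasDerivAt_log_sum_mul_exp [Nonempty ι] {w : ι → ℝ} (hw : ∀ k, 0 < w k) (t : ι → ℝ)
    (c : ℝ) :
    HasDerivAt (fun c ↦ log (∑ k, w k * exp (c * t k)))
      ((∑ k, w k * exp (c * t k) * t k) / ∑ k, w k * exp (c * t k)) c := by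
  have hsum : HasDerivAt (fun c ↦ ∑ k, w k * exp (c * t k))
      (∑ k, w k * exp (c * t k) * t k) c :=
    HasDerivAt.fun_sum fun k _ ↦ by
      simpa [mul_assoc] using ((hasDerivAt_mul_const (t k)).exp).const_mul (w k)
  exact hsum.log (sum_pos (fun k _ ↦ mul_pos (hw k) (exp_pos _)) univ_nonempty).ne'

theorem log_sum_mul_exp_sub_le_of_cross_le [Nonempty ι] {u v t : ι → ℝ} {s L : ℝ}
    (hu : ∀ k, 0 < u k) (hv : ∀ k, 0 < v k) (hs : 1 ≤ s)
    (huv : ∀ k l, u k * v l ≤ s ^ 2 * (u l * v k)) (ht : ∀ k l, t k - t l ≤ L) :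
    (log (∑ k, u k * exp (t k)) - log (∑ k, u k)) -
        (log (∑ k, v k * exp (t k)) - log (∑ k, v k)) ≤ (s - 1) / (s + 1) * L := by
  obtain ⟨c, -, hc⟩ := exists_hasDerivAt_eq_slope
    (fun c ↦ log (∑ k, u k * exp (c * t k)) - log (∑ k, v k * exp (c * t k))) _ zero_lt_one
    (fun c _ ↦ ((hasDerivAt_log_sum_mul_exp hu t c).sub
      (hasDerivAt_log_sum_mul_exp hv t c)).continuousAt.continuousWithinAt)
    (fun c _ ↦ (hasDerivAt_log_sum_mul_exp hu t c).sub (hasDerivAt_log_sum_mul_exp hv t c))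
  simp only [one_mul, zero_mul, exp_zero, mul_one, sub_zero, div_one] at hc
  rw [sub_sub_sub_comm, ← hc]
  -- tilting both weights by `exp (c t)` preserves their cross ratios
  refine sum_mul_div_sum_sub_le_of_cross_le (fun k ↦ mul_pos (hu k) (exp_pos _))
    (fun k ↦ mul_pos (hv k) (exp_pos _)) hs (fun k l ↦ ?_) ht
  calc u k * exp (c * t k) * (v l * exp (c * t l))
      = u k * v l * (exp (c * t k) * exp (c * t l)) := by ring
    _ ≤ s ^ 2 * (u l * v k) * (exp (c * t k) * exp (c * t l)) :=
        mul_le_mul_of_nonneg_right (huv k l) (by positivity)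
    _ = s ^ 2 * (u l * exp (c * t l) * (v k * exp (c * t k))) := by ring

theorem log_dotProduct_cross_ratio_le [Nonempty ι] {a b x y : ι → ℝ} {Δ D : ℝ}
    (ha : ∀ k, 0 < a k) (hb : ∀ k, 0 < b k) (hx : ∀ k, 0 < x k) (hy : ∀ k, 0 < y k)
    (hab : ∀ k l, log (a k * b l / (a l * b k)) ≤ Δ) (hxy : ∀ k l, x k * y l / (x l * y k) ≤ D) :
    log ((a ⬝ᵥ x) * (b ⬝ᵥ y) / ((b ⬝ᵥ x) * (a ⬝ᵥ y))) ≤ tanh (Δ / 4) * log D := by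
  simp only [dotProduct]
  have hdot : ∀ w z : ι → ℝ, (∀ k, 0 < w k) → (∀ k, 0 < z k) → 0 < ∑ k, w k * z k :=
    fun w z hw hz ↦ sum_pos (fun k _ ↦ mul_pos (hw k) (hz k)) univ_nonempty
  have hΔ : 0 ≤ Δ := by
    have k := Classical.arbitrary ι
    simpa [div_self (mul_pos (ha k) (hb k)).ne'] using hab k k
  have hy_eq : ∀ w : ι → ℝ, ∑ k, w k * x k * exp (log (y k / x k)) = ∑ k, w k * y k :=
    fun w ↦ by simp only [exp_log (div_pos (hy _) (hx _)), mul_assoc, mul_div_cancel₀ _ (hx _).ne']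
  have key := log_sum_mul_exp_sub_le_of_cross_le (u := fun k ↦ b k * x k)
    (v := fun k ↦ a k * x k) (t := fun k ↦ log (y k / x k)) (s := exp (Δ / 2)) (L := log D)
    (fun k ↦ mul_pos (hb k) (hx k)) (fun k ↦ mul_pos (ha k) (hx k)) (one_le_exp (by linarith))
    (fun k l ↦ ?_) (fun k l ↦ ?_)
  · rw [tanh_eq_exp_two_mul, show 2 * (Δ / 4) = Δ / 2 by ring]
    rw [log_div (mul_pos (hdot a x ha hx) (hdot b y hb hy)).ne'
      (mul_pos (hdot b x hb hx) (hdot a y ha hy)).ne',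
      log_mul (hdot a x ha hx).ne' (hdot b y hb hy).ne',
      log_mul (hdot b x hb hx).ne' (hdot a y ha hy).ne']
    simp only [hy_eq] at key
    linarith
  · have hba : a l * b k ≤ exp Δ * (a k * b l) := by
      have h := (log_le_iff_le_exp
        (div_pos (mul_pos (ha l) (hb k)) (mul_pos (ha k) (hb l)))).1 (hab l k)
      rwa [div_le_iff₀ (mul_pos (ha k) (hb l))] at h
    calc b k * x k * (a l * x l) = a l * b k * (x k * x l) := by ring
      _ ≤ exp Δ * (a k * b l) * (x k * x l) :=
        mul_le_mul_of_nonneg_right hba (mul_pos (hx k) (hx l)).le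
      _ = exp (Δ / 2) ^ 2 * (b l * x l * (a k * x k)) := by
        rw [← exp_nat_mul]; push_cast; ring_nf
  · rw [← log_div (div_pos (hy k) (hx k)).ne' (div_pos (hy l) (hx l)).ne']
    refine log_le_log (div_pos (div_pos (hy k) (hx k)) (div_pos (hy l) (hx l))) ?_
    calc y k / x k / (y l / x l) = x l * y k / (x k * y l) := by field_simp
      _ ≤ D := hxy l k

end

/-- Birkhoff contraction: a strictly positive matrix `A` with projective
diameter `Δ(A) = max log (A_ik A_jl / (A_il A_jk))` contracts the Hilbert projective
metric with coefficient `τ(A) = tanh (Δ(A)/4) < 1`. -/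
theorem birkhoff_contraction
    (n m : ℕ) [NeZero n] [NeZero m]
    (A : Matrix (Fin n) (Fin m) ℝ) (hA : ∀ i j, 0 < A i j) :
    Real.tanh ((⨆ i, ⨆ j, ⨆ k, ⨆ l, Real.log ((A i k * A j l) / (A i l * A j k))) / 4) < 1 ∧
    ∀ x y : Fin m → ℝ, (∀ j, 0 < x j) → (∀ j, 0 < y j) →
      Real.log (⨆ i, ⨆ j, (A.mulVec x i * A.mulVec y j) / (A.mulVec x j * A.mulVec y i)) ≤
        Real.tanh ((⨆ i, ⨆ j, ⨆ k, ⨆ l, Real.log ((A i k * A j l) / (A i l * A j k))) / 4) *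
          Real.log (⨆ i, ⨆ j, (x i * y j) / (x j * y i)) := by
  refine ⟨tanh_lt_one _, fun x y hx hy ↦ ?_⟩
  obtain ⟨i, hi⟩ := exists_eq_ciSup_of_finite
    (f := fun i ↦ ⨆ j, (A.mulVec x i * A.mulVec y j) / (A.mulVec x j * A.mulVec y i))
  obtain ⟨j, hj⟩ := exists_eq_ciSup_of_finite
    (f := fun j ↦ (A.mulVec x i * A.mulVec y j) / (A.mulVec x j * A.mulVec y i))
  rw [← hi, ← hj]
  refine log_dotProduct_cross_ratio_le (hA i) (hA j) hx hy (fun k l ↦ ?_) (fun k l ↦ ?_)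
  · exact Finite.le_ciSup_of_le i <| Finite.le_ciSup_of_le j <| Finite.le_ciSup_of_le k <|
      Finite.le_ciSup_of_le l le_rfl
  · exact Finite.le_ciSup_of_le k <| Finite.le_ciSup_of_le l le_rfl
end

section
/- The full Sinkhorn map T = T_c ∘ T_r, with T_r(v) = r ⊘ (Kv) and T_c(u) = c ⊘ (Kᵀ u), is a strict contraction in the Hilbert projective metric with rate κ = τ(K)²: d_H(T(v), T(v')) ≤ τ(K)² · d_H(v, v') for all v, v' ∈ R^m_{>0}, and τ(K)² < 1. -/
open Matrix

private lemma my_bdd {p : ℕ} (g : Fin p → ℝ) : BddAbove (Set.range g) :=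
  (Set.finite_range g).bddAbove

private lemma my_ciSup_swap {p : ℕ} [NeZero p] (f : Fin p → Fin p → ℝ) :
    (⨆ i, ⨆ j, f i j) = ⨆ i, ⨆ j, f j i := by
  apply le_antisymm
  · refine ciSup_le fun i => ciSup_le fun j => ?_
    calc f i j ≤ ⨆ b, f b j := le_ciSup (my_bdd fun b => f b j) i
      _ ≤ ⨆ a, ⨆ b, f b a := le_ciSup (my_bdd fun a => ⨆ b, f b a) j
  · refine ciSup_le fun i => ciSup_le fun j => ?_
    calc f j i ≤ ⨆ b, f j b := le_ciSup (my_bdd (f j)) i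
      _ ≤ ⨆ a, ⨆ b, f a b := le_ciSup (my_bdd fun a => ⨆ b, f a b) j

/-- Diagonal-scaling / inversion isometry on the sup-ratio. -/
private lemma inv_scale_iSup {p : ℕ} [NeZero p] (a x y : Fin p → ℝ)
    (ha : ∀ i, 0 < a i) (hx : ∀ i, 0 < x i) (hy : ∀ i, 0 < y i) :
    (⨆ i, ⨆ j, ((a i / x i) * (a j / y j)) / ((a j / x j) * (a i / y i)))
      = ⨆ i, ⨆ j, (x i * y j) / (x j * y i) := by
  have h : ∀ i j : Fin p,
      ((a i / x i) * (a j / y j)) / ((a j / x j) * (a i / y i))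
        = (x j * y i) / (x i * y j) := by
    intro i j
    have := (ha i).ne'; have := (ha j).ne'
    have := (hx i).ne'; have := (hx j).ne'
    have := (hy i).ne'; have := (hy j).ne'
    field_simp
  simp_rw [h]
  exact (my_ciSup_swap fun i j => (x i * y j) / (x j * y i)).symm

private lemma mulVec_pos' {n m : ℕ} [NeZero m] (K : Matrix (Fin n) (Fin m) ℝ)
    (hK : ∀ i j, 0 < K i j) (v : Fin m → ℝ) (hv : ∀ j, 0 < v j) :
    ∀ i, 0 < K.mulVec v i := by
  intro i
  have : K.mulVec v i = ∑ j, K i j * v j := rfl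
  rw [this]
  exact Finset.sum_pos (fun j _ => mul_pos (hK i j) (hv j)) Finset.univ_nonempty

/-- The full Sinkhorn map `T = T_c ∘ T_r`, with `T_r v = r ⊘ (K v)` and
`T_c u = c ⊘ (Kᵀ u)`, is a strict contraction in the Hilbert projective metric with
rate `κ = τ(K)² < 1` (Birkhoff's contraction inequality for `K` and `Kᵀ` is assumed
as a hypothesis). -/
theorem sinkhorn_full_step_contraction
    (n m : ℕ) [NeZero n] [NeZero m]
    (K : Matrix (Fin n) (Fin m) ℝ) (hK : ∀ i j, 0 < K i j)
    (r : Fin n → ℝ) (hr : ∀ i, 0 < r i)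
    (c : Fin m → ℝ) (hc : ∀ j, 0 < c j)
    (τ : ℝ)
    (hτ : τ = Real.tanh ((⨆ i, ⨆ j, ⨆ k, ⨆ l,
        Real.log ((K i k * K j l) / (K i l * K j k))) / 4))
    (hBirkhoffK : ∀ x y : Fin m → ℝ, (∀ j, 0 < x j) → (∀ j, 0 < y j) →
      Real.log (⨆ i, ⨆ j, (K.mulVec x i * K.mulVec y j) / (K.mulVec x j * K.mulVec y i)) ≤
        τ * Real.log (⨆ i, ⨆ j, (x i * y j) / (x j * y i)))
    (hBirkhoffKT : ∀ x y : Fin n → ℝ, (∀ i, 0 < x i) → (∀ i, 0 < y i) →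
      Real.log (⨆ i, ⨆ j,
          (Kᵀ.mulVec x i * Kᵀ.mulVec y j) / (Kᵀ.mulVec x j * Kᵀ.mulVec y i)) ≤
        τ * Real.log (⨆ i, ⨆ j, (x i * y j) / (x j * y i))) :
    τ ^ 2 < 1 ∧
    ∀ v v' : Fin m → ℝ, (∀ j, 0 < v j) → (∀ j, 0 < v' j) →
      Real.log (⨆ i, ⨆ j,
          ((fun j' => c j' / Kᵀ.mulVec (fun i' => r i' / K.mulVec v i') j') i *
            (fun j' => c j' / Kᵀ.mulVec (fun i' => r i' / K.mulVec v' i') j') j) /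
          ((fun j' => c j' / Kᵀ.mulVec (fun i' => r i' / K.mulVec v i') j') j *
            (fun j' => c j' / Kᵀ.mulVec (fun i' => r i' / K.mulVec v' i') j') i)) ≤
        τ ^ 2 * Real.log (⨆ i, ⨆ j, (v i * v' j) / (v j * v' i)) := by
  -- τ is nonnegative: the projective diameter is ≥ 0 (take i=j, k=l).
  have hτnn : 0 ≤ τ := by
    rw [hτ]
    have h0 : (0 : ℝ) ≤ (⨆ i, ⨆ j, ⨆ k, ⨆ l,
        Real.log ((K i k * K j l) / (K i l * K j k))) / 4 := by
      have i0 : Fin n := Classical.arbitrary _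
      have k0 : Fin m := Classical.arbitrary _
      have h00 : (0 : ℝ) ≤ Real.log ((K i0 k0 * K i0 k0) / (K i0 k0 * K i0 k0)) := by
        rw [div_self (ne_of_gt (mul_pos (hK i0 k0) (hK i0 k0)))]
        simp
      have : (0:ℝ) ≤ ⨆ i, ⨆ j, ⨆ k, ⨆ l,
          Real.log ((K i k * K j l) / (K i l * K j k)) := by
        calc (0:ℝ) ≤ Real.log ((K i0 k0 * K i0 k0) / (K i0 k0 * K i0 k0)) := h00
          _ ≤ ⨆ l, Real.log ((K i0 k0 * K i0 l) / (K i0 l * K i0 k0)) :=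
              le_ciSup (my_bdd fun l => Real.log ((K i0 k0 * K i0 l) / (K i0 l * K i0 k0))) k0
          _ ≤ ⨆ k, ⨆ l, Real.log ((K i0 k * K i0 l) / (K i0 l * K i0 k)) :=
              le_ciSup (my_bdd fun k => ⨆ l,
                Real.log ((K i0 k * K i0 l) / (K i0 l * K i0 k))) k0
          _ ≤ ⨆ j, ⨆ k, ⨆ l, Real.log ((K i0 k * K j l) / (K i0 l * K j k)) :=
              le_ciSup (my_bdd fun j => ⨆ k, ⨆ l,
                Real.log ((K i0 k * K j l) / (K i0 l * K j k))) i0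
          _ ≤ ⨆ i, ⨆ j, ⨆ k, ⨆ l, Real.log ((K i k * K j l) / (K i l * K j k)) :=
              le_ciSup (my_bdd fun i => ⨆ j, ⨆ k, ⨆ l,
                Real.log ((K i k * K j l) / (K i l * K j k))) i0
      linarith
    rw [Real.tanh_eq_sinh_div_cosh]
    exact div_nonneg (by rwa [Real.sinh_nonneg_iff]) (Real.cosh_pos _).le
  have hτlt : τ < 1 := by
    rw [hτ, Real.tanh_eq_sinh_div_cosh]
    rw [div_lt_one (Real.cosh_pos _)]
    exact Real.sinh_lt_cosh _
  constructor
  · exact pow_lt_one₀ hτnn hτlt two_ne_zero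
  intro v v' hv hv'
  set x : Fin n → ℝ := fun i' => r i' / K.mulVec v i' with hxdef
  set y : Fin n → ℝ := fun i' => r i' / K.mulVec v' i' with hydef
  have hKv := mulVec_pos' K hK v hv
  have hKv' := mulVec_pos' K hK v' hv'
  have hx : ∀ i, 0 < x i := fun i => div_pos (hr i) (hKv i)
  have hy : ∀ i, 0 < y i := fun i => div_pos (hr i) (hKv' i)
  have hKTx := mulVec_pos' Kᵀ (fun i j => hK j i) x hx
  have hKTy := mulVec_pos' Kᵀ (fun i j => hK j i) y hy
  -- rewrite the final sup using the inversion isometry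
  have step1 :
      (⨆ i, ⨆ j,
          ((fun j' => c j' / Kᵀ.mulVec x j') i * (fun j' => c j' / Kᵀ.mulVec y j') j) /
          ((fun j' => c j' / Kᵀ.mulVec x j') j * (fun j' => c j' / Kᵀ.mulVec y j') i))
        = ⨆ i, ⨆ j, (Kᵀ.mulVec x i * Kᵀ.mulVec y j) / (Kᵀ.mulVec x j * Kᵀ.mulVec y i) := by
    simpa using inv_scale_iSup c (Kᵀ.mulVec x) (Kᵀ.mulVec y) hc hKTx hKTy
  have step3 :
      (⨆ i, ⨆ j, (x i * y j) / (x j * y i))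
        = ⨆ i, ⨆ j, (K.mulVec v i * K.mulVec v' j) / (K.mulVec v j * K.mulVec v' i) := by
    simpa [hxdef, hydef] using inv_scale_iSup r (K.mulVec v) (K.mulVec v') hr hKv hKv'
  have h2 := hBirkhoffKT x y hx hy
  have h4 := hBirkhoffK v v' hv hv'
  calc Real.log (⨆ i, ⨆ j,
          ((fun j' => c j' / Kᵀ.mulVec x j') i * (fun j' => c j' / Kᵀ.mulVec y j') j) /
          ((fun j' => c j' / Kᵀ.mulVec x j') j * (fun j' => c j' / Kᵀ.mulVec y j') i))
      = Real.log (⨆ i, ⨆ j,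
          (Kᵀ.mulVec x i * Kᵀ.mulVec y j) / (Kᵀ.mulVec x j * Kᵀ.mulVec y i)) := by
        rw [step1]
    _ ≤ τ * Real.log (⨆ i, ⨆ j, (x i * y j) / (x j * y i)) := h2
    _ = τ * Real.log (⨆ i, ⨆ j,
          (K.mulVec v i * K.mulVec v' j) / (K.mulVec v j * K.mulVec v' i)) := by rw [step3]
    _ ≤ τ * (τ * Real.log (⨆ i, ⨆ j, (v i * v' j) / (v j * v' i))) :=
        mul_le_mul_of_nonneg_left h4 hτnn
    _ = τ ^ 2 * Real.log (⨆ i, ⨆ j, (v i * v' j) / (v j * v' i)) := by ring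
end
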